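/- For the unitary T of the previous statement and any x ∈ Ω, T|x⟩ = (1/√n_x)|f(x)⟩ + |γ⟩, where n_x = |f⁻¹(f(x))|, |γ⟩ lies in the orthogonal complement of span{|y_1⟩,…,|y_m⟩}, and ‖|γ⟩‖ = √((n_x − 1)/n_x). -/

import Mathlib

open scoped InnerProductSpace

/-- `|u_y⟩ = (1/√n_y) Σ_{x ∈ f⁻¹(y)} |x⟩`, the normalized uniform superposition over the
fiber of `f` above `y`, where `n_y = |f⁻¹(y)|`. -/
noncomputable def fiberVec {Ω Ω' : Type*} [Fintype Ω] [DecidableEq Ω] [DecidableEq Ω']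
    (f : Ω → Ω') (y : Ω') : EuclideanSpace ℂ Ω :=
  ((Real.sqrt (Fintype.card {x // f x = y}) : ℂ))⁻¹ •
    ∑ x ∈ Finset.univ.filter (fun x => f x = y), EuclideanSpace.single x (1 : ℂ)

/-- `M = Σ_{y ∈ Ω'} |y⟩⟨u_y|`. -/
noncomputable def fiberKernel {Ω Ω' : Type*} [Fintype Ω] [Fintype Ω']
    [DecidableEq Ω] [DecidableEq Ω'] (f : Ω → Ω') :
    EuclideanSpace ℂ Ω →ₗ[ℂ] EuclideanSpace ℂ Ω' :=
  ∑ y : Ω', ((innerSL ℂ (fiberVec f y)).toLinearMap).smulRight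
      (EuclideanSpace.single y (1 : ℂ))

/-! The coefficient of `y (f x)` comes from `⟪u_i, x⟫ = [f x = i] / √n_x`. The remainder
`γ = ∑ k, ⟪v k, x⟫ • w k` lies in `span w = (span y)ᗮ`, and since the `u_i` together with the `v_k`
form an orthonormal basis of the whole space, Parseval gives
`‖γ‖² = ∑ k, ‖⟪v k, x⟫‖² = ‖x‖² - ∑ i, ‖⟪u_i, x⟫‖² = 1 - 1 / n_x`. -/

section
variable {𝕜 E ι : Type*} [RCLike 𝕜] [NormedAddCommGroup E] [InnerProductSpace 𝕜 E] [Fintype ι]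
  {v : ι → E}

theorem Orthonormal.norm_sum_smul_sq (hv : Orthonormal 𝕜 v) (l : ι → 𝕜) :
    ‖∑ i, l i • v i‖ ^ 2 = ∑ i, ‖l i‖ ^ 2 := by
  simpa using hv.orthogonalFamily.norm_sum l Finset.univ

theorem Orthonormal.starProjection_span_eq_sum
    [(Submodule.span 𝕜 (Set.range v)).HasOrthogonalProjection] (hv : Orthonormal 𝕜 v) (x : E) :
    (Submodule.span 𝕜 (Set.range v)).starProjection x = ∑ i, ⟪v i, x⟫_𝕜 • v i := by
  refine Submodule.eq_starProjection_of_mem_of_inner_eq_zero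
    (Submodule.sum_mem _ fun i _ => Submodule.smul_mem _ _ (Submodule.subset_span ⟨i, rfl⟩))
    fun z hz => ?_
  have hrange : Set.range v ⊆ LinearMap.ker (innerₛₗ 𝕜 (x - ∑ i, ⟪v i, x⟫_𝕜 • v i)) := by
    rintro _ ⟨j, rfl⟩
    rw [SetLike.mem_coe, LinearMap.mem_ker, innerₛₗ_apply_apply, inner_sub_left,
      hv.inner_left_fintype, inner_conj_symm, sub_self]
  exact Submodule.span_le.2 hrange hz

theorem Orthonormal.norm_sq_starProjection_span
    [(Submodule.span 𝕜 (Set.range v)).HasOrthogonalProjection] (hv : Orthonormal 𝕜 v) (x : E) :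
    ‖(Submodule.span 𝕜 (Set.range v)).starProjection x‖ ^ 2 = ∑ i, ‖⟪v i, x⟫_𝕜‖ ^ 2 := by
  rw [hv.starProjection_span_eq_sum, hv.norm_sum_smul_sq]

theorem Orthonormal.sum_sq_norm_inner_add_of_span_eq_orthogonal {κ : Type*} [Fintype κ]
    {w : κ → E} (hv : Orthonormal 𝕜 v) (hw : Orthonormal 𝕜 w)
    (hspan : Submodule.span 𝕜 (Set.range w) = (Submodule.span 𝕜 (Set.range v))ᗮ) (x : E) :
    ∑ i, ‖⟪v i, x⟫_𝕜‖ ^ 2 + ∑ k, ‖⟪w k, x⟫_𝕜‖ ^ 2 = ‖x‖ ^ 2 := by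
  have := FiniteDimensional.span_of_finite 𝕜 (Set.finite_range v)
  have := FiniteDimensional.span_of_finite 𝕜 (Set.finite_range w)
  have hproj : ‖(Submodule.span 𝕜 (Set.range w)).starProjection x‖
      = ‖(Submodule.span 𝕜 (Set.range v))ᗮ.starProjection x‖ := by
    congr!
  rw [← hv.norm_sq_starProjection_span, ← hw.norm_sq_starProjection_span, hproj,
    ← Submodule.norm_sq_eq_add_norm_sq_starProjection]

end

section
variable {Ω Ω' : Type*} [Fintype Ω] [DecidableEq Ω] [DecidableEq Ω'] (f : Ω → Ω')

theorem inner_fiberVec_single (i : Ω') (x : Ω) :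
    ⟪fiberVec f i, EuclideanSpace.single x (1 : ℂ)⟫_ℂ
      = if f x = i then ((√(Fintype.card {x' // f x' = i}) : ℂ))⁻¹ else 0 := by
  rw [fiberVec, inner_smul_left, sum_inner, map_inv₀, Complex.conj_ofReal]
  simp_rw [EuclideanSpace.inner_single_left, PiLp.single_apply, map_one, one_mul]
  rw [Finset.sum_ite_eq']
  simp

theorem sum_inner_fiberVec_single_smul [Fintype Ω'] {M : Type*} [AddCommMonoid M] [Module ℂ M]
    (z : Ω' → M) (x : Ω) :
    ∑ i, ⟪fiberVec f i, EuclideanSpace.single x (1 : ℂ)⟫_ℂ • z i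
      = ((√(Fintype.card {x' // f x' = f x}) : ℂ))⁻¹ • z (f x) := by
  simp_rw [inner_fiberVec_single, ite_smul, zero_smul]
  rw [Fintype.sum_ite_eq]

theorem sum_sq_norm_inner_fiberVec_single [Fintype Ω'] (x : Ω) :
    ∑ i, ‖⟪fiberVec f i, EuclideanSpace.single x (1 : ℂ)⟫_ℂ‖ ^ 2
      = (Fintype.card {x' // f x' = f x} : ℝ)⁻¹ := by
  simp_rw [inner_fiberVec_single, apply_ite (‖·‖ ^ 2), norm_zero, zero_pow two_ne_zero]
  rw [Fintype.sum_ite_eq, norm_inv, Complex.norm_real,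
    Real.norm_of_nonneg (Real.sqrt_nonneg _), inv_pow, Real.sq_sqrt (Nat.cast_nonneg _)]

variable {f} in
theorem orthonormal_fiberVec (hf : Function.Surjective f) :
    Orthonormal ℂ (fiberVec f) := by
  rw [orthonormal_iff_ite]
  intro i j
  nth_rw 2 [fiberVec]
  have hterm : ∀ x ∈ Finset.univ.filter (fun x => f x = j),
      ⟪fiberVec f i, EuclideanSpace.single x (1 : ℂ)⟫_ℂ
        = if j = i then ((√(Fintype.card {x' // f x' = i}) : ℂ))⁻¹ else 0 := by
    intro x hx
    rw [inner_fiberVec_single, (Finset.mem_filter.1 hx).2]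
  rw [inner_smul_right, inner_sum, Finset.sum_congr rfl hterm, Finset.sum_const,
    ← Fintype.card_subtype, nsmul_eq_mul]
  obtain rfl | hij := eq_or_ne i j
  · have hn : 0 < (Fintype.card {x // f x = i} : ℝ) := by
      obtain ⟨x, hx⟩ := hf i
      exact Nat.cast_pos.2 (Fintype.card_pos_iff.2 ⟨⟨x, hx⟩⟩)
    have hsqrt : ((√(Fintype.card {x // f x = i}) : ℂ)) ≠ 0 :=
      Complex.ofReal_ne_zero.2 (Real.sqrt_pos.2 hn).ne'
    rw [if_pos rfl, if_pos rfl]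
    field_simp
    rw [← Complex.ofReal_pow, Real.sq_sqrt (Nat.cast_nonneg _), Complex.ofReal_natCast]
  · rw [if_neg hij.symm, if_neg hij, mul_zero, mul_zero]

end

theorem surjection_operator_apply_general {Ω Ω' κ : Type*} [Fintype Ω] [Fintype Ω'] [Fintype κ]
    [DecidableEq Ω] [DecidableEq Ω'] (f : Ω → Ω') (hf : Function.Surjective f)
    (y : Ω' → EuclideanSpace ℂ Ω)
    (v : κ → EuclideanSpace ℂ Ω) (hv : Orthonormal ℂ v)
    (hvspan : Submodule.span ℂ (Set.range v) = (Submodule.span ℂ (Set.range (fiberVec f)))ᗮ)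
    (w : κ → EuclideanSpace ℂ Ω) (hw : Orthonormal ℂ w)
    (hwspan : Submodule.span ℂ (Set.range w) = (Submodule.span ℂ (Set.range y))ᗮ)
    (x : Ω) :
    ∃ γ : EuclideanSpace ℂ Ω,
      ((∑ i : Ω', ((innerSL ℂ (fiberVec f i)).toLinearMap).smulRight (y i)) +
          ∑ k : κ, ((innerSL ℂ (v k)).toLinearMap).smulRight (w k))
        (EuclideanSpace.single x (1 : ℂ))
        = ((Real.sqrt (Fintype.card {x' // f x' = f x}) : ℂ))⁻¹ • y (f x) + γ ∧
      γ ∈ (Submodule.span ℂ (Set.range y))ᗮ ∧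
      ‖γ‖ = Real.sqrt (((Fintype.card {x' // f x' = f x} : ℝ) - 1)
              / (Fintype.card {x' // f x' = f x} : ℝ)) := by
  have hn : (Fintype.card {x' // f x' = f x} : ℝ) ≠ 0 :=
    Nat.cast_ne_zero.2 (Fintype.card_pos_iff.2 ⟨⟨x, rfl⟩⟩).ne'
  refine ⟨∑ k, ⟪v k, EuclideanSpace.single x (1 : ℂ)⟫_ℂ • w k, ?_, ?_, ?_⟩
  · simp only [LinearMap.add_apply, LinearMap.sum_apply, LinearMap.smulRight_apply,
      ContinuousLinearMap.coe_coe, innerSL_apply_apply]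
    rw [sum_inner_fiberVec_single_smul]
  · rw [← hwspan]
    exact Submodule.sum_mem _ fun k _ => Submodule.smul_mem _ _ (Submodule.subset_span ⟨k, rfl⟩)
  · have hparseval := (orthonormal_fiberVec hf).sum_sq_norm_inner_add_of_span_eq_orthogonal hv
      hvspan (EuclideanSpace.single x (1 : ℂ))
    rw [sum_sq_norm_inner_fiberVec_single, PiLp.norm_single, norm_one, one_pow] at hparseval
    rw [← Real.sqrt_sq (norm_nonneg _), hw.norm_sum_smul_sq, sub_div, div_self hn, one_div,
      ← hparseval, add_sub_cancel_left]

/-- For the unitary `T = Σ_i |y_i⟩⟨u_i| + Σ_k |w_k⟩⟨v_k|` and any `x ∈ Ω`,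
`T|x⟩ = (1/√n_x)|f(x)⟩ + |γ⟩` where `n_x = |f⁻¹(f(x))|`, `|γ⟩ ⟂ span{|y_i⟩}`, and
`‖γ‖ = √((n_x − 1)/n_x)`. -/
theorem surjection_operator_apply {Ω Ω' κ : Type*} [Fintype Ω] [Fintype Ω'] [Fintype κ]
    [DecidableEq Ω] [DecidableEq Ω'] (f : Ω → Ω') (hf : Function.Surjective f)
    (y : Ω' → EuclideanSpace ℂ Ω) (hy : Orthonormal ℂ y)
    (v : κ → EuclideanSpace ℂ Ω) (hv : Orthonormal ℂ v)
    (hvspan : Submodule.span ℂ (Set.range v) = (Submodule.span ℂ (Set.range (fiberVec f)))ᗮ)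
    (w : κ → EuclideanSpace ℂ Ω) (hw : Orthonormal ℂ w)
    (hwspan : Submodule.span ℂ (Set.range w) = (Submodule.span ℂ (Set.range y))ᗮ)
    (x : Ω) :
    ∃ γ : EuclideanSpace ℂ Ω,
      ((∑ i : Ω', ((innerSL ℂ (fiberVec f i)).toLinearMap).smulRight (y i)) +
          ∑ k : κ, ((innerSL ℂ (v k)).toLinearMap).smulRight (w k))
        (EuclideanSpace.single x (1 : ℂ))
        = ((Real.sqrt (Fintype.card {x' // f x' = f x}) : ℂ))⁻¹ • y (f x) + γ ∧
      γ ∈ (Submodule.span ℂ (Set.range y))ᗮ ∧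
      ‖γ‖ = Real.sqrt (((Fintype.card {x' // f x' = f x} : ℝ) - 1)
              / (Fintype.card {x' // f x' = f x} : ℝ)) :=
  surjection_operator_apply_general f hf y v hv hvspan w hw hwspan x
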